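/- Let w_1,…,w_n > 0 and a_1,…,a_n ∈ ℝ with max_i a_i − min_i a_i ≤ η. Then the weighted variance satisfies e^{−2η} V(0) ≤ V(c) ≤ e^{2η} V(0) for all c ∈ [0,1], where V(c) = [∑_{i,q} w_i w_q e^{c a_i} e^{c a_q} (a_i − a_q)²] / [2 ∑_{i,q} w_i w_q e^{c a_i} e^{c a_q}]. -/
import Mathlib


open Finset in
/-- Tilting positive weights `w i` by `exp (c * a i)`, `c ∈ [0,1]`, changes the
weighted variance of values `a i` of range at most `η` by at most `e^{±2η}`. -/
theorem stmt_5 (n : ℕ) (w a : Fin n → ℝ) (η : ℝ)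
    (hw : ∀ i, 0 < w i)
    (hrange : ∀ i j, a i - a j ≤ η)
    (V : ℝ → ℝ)
    (hV : ∀ c, V c =
      (∑ i, ∑ q, w i * w q * Real.exp (c * a i) * Real.exp (c * a q) * (a i - a q) ^ 2)
        / (2 * ∑ i, ∑ q, w i * w q * Real.exp (c * a i) * Real.exp (c * a q))) :
    ∀ c ∈ Set.Icc (0 : ℝ) 1,
      Real.exp (-2 * η) * V 0 ≤ V c ∧ V c ≤ Real.exp (2 * η) * V 0 := by
  intro c hc
  obtain ⟨hc0, hc1⟩ := hc
  rcases Nat.eq_zero_or_pos n with hn | hn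
  · subst hn
    simp [hV]
  · obtain ⟨i0, -, hi0⟩ := Finset.exists_min_image Finset.univ a ⟨⟨0, hn⟩, Finset.mem_univ _⟩
    set m := a i0 with hm
    have hη : 0 ≤ η := by have := hrange i0 i0; linarith
    have hlo : ∀ i, m ≤ a i := fun i => hi0 i (Finset.mem_univ i)
    have hhi : ∀ i, a i ≤ m + η := fun i => by have := hrange i i0; linarith
    set N : ℝ → ℝ := fun c' => ∑ i, ∑ q,
      w i * w q * Real.exp (c' * a i) * Real.exp (c' * a q) * (a i - a q) ^ 2 with hNdef
    set D : ℝ → ℝ := fun c' => ∑ i, ∑ q,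
      w i * w q * Real.exp (c' * a i) * Real.exp (c' * a q) with hDdef
    have hVc : ∀ c', V c' = N c' / (2 * D c') := fun c' => hV c'
    have key : ∀ i q : Fin n,
        Real.exp (2 * c * m) ≤ Real.exp (c * a i) * Real.exp (c * a q) ∧
        Real.exp (c * a i) * Real.exp (c * a q) ≤ Real.exp (2 * c * (m + η)) := by
      intro i q
      have h1 := mul_le_mul_of_nonneg_left (hlo i) hc0
      have h2 := mul_le_mul_of_nonneg_left (hlo q) hc0
      have h3 := mul_le_mul_of_nonneg_left (hhi i) hc0
      have h4 := mul_le_mul_of_nonneg_left (hhi q) hc0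
      constructor <;> rw [← Real.exp_add] <;> apply Real.exp_le_exp.mpr <;> nlinarith
    have hN0 : N 0 = ∑ i, ∑ q, w i * w q * (a i - a q) ^ 2 := by
      simp [hNdef]
    have hD0 : D 0 = ∑ i, ∑ q, w i * w q := by
      simp [hDdef]
    haveI : Nonempty (Fin n) := ⟨⟨0, hn⟩⟩
    have hDpos : ∀ c', 0 < D c' := by
      intro c'
      refine Finset.sum_pos (fun i _ => Finset.sum_pos (fun q _ => ?_) Finset.univ_nonempty)
        Finset.univ_nonempty
      exact mul_pos (mul_pos (mul_pos (hw i) (hw q)) (Real.exp_pos _)) (Real.exp_pos _)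
    have hN0nn : 0 ≤ N 0 := by
      rw [hN0]
      apply Finset.sum_nonneg; intro i _; apply Finset.sum_nonneg; intro q _
      have := (hw i).le; have := (hw q).le; positivity
    have hNub : N c ≤ Real.exp (2 * c * (m + η)) * N 0 := by
      rw [hN0, Finset.mul_sum]
      apply Finset.sum_le_sum; intro i _
      rw [Finset.mul_sum]
      apply Finset.sum_le_sum; intro q _
      have hwq : (0:ℝ) ≤ w i * w q * (a i - a q) ^ 2 := by
        have := (hw i).le; have := (hw q).le; positivity
      calc w i * w q * Real.exp (c * a i) * Real.exp (c * a q) * (a i - a q) ^ 2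
          = (Real.exp (c * a i) * Real.exp (c * a q)) * (w i * w q * (a i - a q) ^ 2) := by ring
        _ ≤ Real.exp (2 * c * (m + η)) * (w i * w q * (a i - a q) ^ 2) :=
            mul_le_mul_of_nonneg_right (key i q).2 hwq
    have hNlb : Real.exp (2 * c * m) * N 0 ≤ N c := by
      rw [hN0, Finset.mul_sum]
      apply Finset.sum_le_sum; intro i _
      rw [Finset.mul_sum]
      apply Finset.sum_le_sum; intro q _
      have hwq : (0:ℝ) ≤ w i * w q * (a i - a q) ^ 2 := by
        have := (hw i).le; have := (hw q).le; positivity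
      calc Real.exp (2 * c * m) * (w i * w q * (a i - a q) ^ 2)
          ≤ (Real.exp (c * a i) * Real.exp (c * a q)) * (w i * w q * (a i - a q) ^ 2) :=
            mul_le_mul_of_nonneg_right (key i q).1 hwq
        _ = w i * w q * Real.exp (c * a i) * Real.exp (c * a q) * (a i - a q) ^ 2 := by ring
    have hDub : D c ≤ Real.exp (2 * c * (m + η)) * D 0 := by
      rw [hD0, Finset.mul_sum]
      apply Finset.sum_le_sum; intro i _
      rw [Finset.mul_sum]
      apply Finset.sum_le_sum; intro q _
      have hwq : (0:ℝ) ≤ w i * w q := by have := (hw i).le; have := (hw q).le; positivity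
      calc w i * w q * Real.exp (c * a i) * Real.exp (c * a q)
          = (Real.exp (c * a i) * Real.exp (c * a q)) * (w i * w q) := by ring
        _ ≤ Real.exp (2 * c * (m + η)) * (w i * w q) :=
            mul_le_mul_of_nonneg_right (key i q).2 hwq
    have hDlb : Real.exp (2 * c * m) * D 0 ≤ D c := by
      rw [hD0, Finset.mul_sum]
      apply Finset.sum_le_sum; intro i _
      rw [Finset.mul_sum]
      apply Finset.sum_le_sum; intro q _
      have hwq : (0:ℝ) ≤ w i * w q := by have := (hw i).le; have := (hw q).le; positivity
      calc Real.exp (2 * c * m) * (w i * w q)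
          ≤ (Real.exp (c * a i) * Real.exp (c * a q)) * (w i * w q) :=
            mul_le_mul_of_nonneg_right (key i q).1 hwq
        _ = w i * w q * Real.exp (c * a i) * Real.exp (c * a q) := by ring
    have hV0nn : 0 ≤ V 0 := by
      rw [hVc]
      exact div_nonneg hN0nn (by have := hDpos 0; linarith)
    have hexpsplit : Real.exp (2 * c * (m + η)) = Real.exp (2 * c * m) * Real.exp (2 * c * η) := by
      rw [← Real.exp_add]; ring_nf
    have hd0 : (D 0) ≠ 0 := (hDpos 0).ne'
    have hcη : 2 * c * η ≤ 2 * η := by nlinarith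
    have hNcnn : 0 ≤ N c := le_trans (mul_nonneg (Real.exp_pos _).le hN0nn) hNlb
    have hDc2 : (0:ℝ) < 2 * D c := by have := hDpos c; linarith
    have hDub2 : 2 * D c ≤ 2 * (Real.exp (2 * c * (m + η)) * D 0) := by linarith [hDub]
    have hDlb2 : 2 * (Real.exp (2 * c * m) * D 0) ≤ 2 * D c := by linarith [hDlb]
    have hDlb2pos : (0:ℝ) < 2 * (Real.exp (2 * c * m) * D 0) := by
      have := hDpos 0; have := Real.exp_pos (2 * c * m); positivity
    constructor
    · -- lower bound
      have h1 : (Real.exp (2 * c * m) * N 0) / (2 * (Real.exp (2 * c * (m + η)) * D 0)) ≤ V c := by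
        rw [hVc]
        exact div_le_div₀ hNcnn hNlb hDc2 hDub2
      have heq : (Real.exp (2 * c * m) * N 0) / (2 * (Real.exp (2 * c * (m + η)) * D 0))
          = Real.exp (-(2 * c * η)) * V 0 := by
        rw [hVc, hexpsplit, Real.exp_neg]
        field_simp [hd0]
      rw [heq] at h1
      refine le_trans ?_ h1
      refine mul_le_mul_of_nonneg_right ?_ hV0nn
      apply Real.exp_le_exp.mpr
      linarith
    · -- upper bound
      have h1 : V c ≤ (Real.exp (2 * c * (m + η)) * N 0) / (2 * (Real.exp (2 * c * m) * D 0)) := by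
        rw [hVc]
        exact div_le_div₀ (mul_nonneg (Real.exp_pos _).le hN0nn) hNub hDlb2pos hDlb2
      have heq : (Real.exp (2 * c * (m + η)) * N 0) / (2 * (Real.exp (2 * c * m) * D 0))
          = Real.exp (2 * c * η) * V 0 := by
        rw [hVc, hexpsplit]
        field_simp [hd0]
      rw [heq] at h1
      refine le_trans h1 ?_
      exact mul_le_mul_of_nonneg_right (Real.exp_le_exp.mpr hcη) hV0nn
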